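/- arXiv:1905.09040 — 8 statements merged into one kernel-verified Lean document; each statement's English description precedes it below -/
import Mathlib

section
/- Let V be an n-dimensional real inner product space (n ≥ 3), W a real inner product space, α : V × V → W a symmetric bilinear map, and L a symmetric bilinear form on V such that for all orthonormal X, Y ∈ V: L(X,X) + L(Y,Y) = ⟨α(X,X),α(Y,Y)⟩ − ‖α(X,Y)‖². If there exists a unit vector X₀ with α(X₀, Z) = 0 for all Z ∈ V (positive relative nullity), then for every unit vector Y orthogonal to X₀, the Ricci contraction of the induced curvature tensor satisfies Ric(Y,Y) = s/(n−1), where s is the scalar curvature. -/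
open scoped RealInnerProductSpace

theorem stmt_4 {V W : Type*} [NormedAddCommGroup V] [InnerProductSpace ℝ V]
    [NormedAddCommGroup W] [InnerProductSpace ℝ W]
    (n : ℕ) (hn : 3 ≤ n) (b : OrthonormalBasis (Fin n) ℝ V)
    (α : V →ₗ[ℝ] V →ₗ[ℝ] W) (hαsymm : ∀ x y, α x y = α y x)
    (L : V →ₗ[ℝ] V →ₗ[ℝ] ℝ) (hLsymm : ∀ x y, L x y = L y x)
    (hCF : ∀ X Y : V, ‖X‖ = 1 → ‖Y‖ = 1 → ⟪X, Y⟫ = 0 →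
      L X X + L Y Y = ⟪α X X, α Y Y⟫ - ‖α X Y‖ ^ 2)
    (R : V → V → V → V → ℝ)
    (hR : ∀ X Y Z T, R X Y Z T = ⟪α X T, α Y Z⟫ - ⟪α X Z, α Y T⟫)
    (Ric : V → V → ℝ)
    (hRic : ∀ X Y, Ric X Y = ∑ j, R X (b j) (b j) Y)
    (s : ℝ) (hs : s = ∑ j, Ric (b j) (b j))
    (X₀ : V) (hX₀ : ‖X₀‖ = 1) (hnull : ∀ Z : V, α X₀ Z = 0) :
    ∀ Y : V, ‖Y‖ = 1 → ⟪X₀, Y⟫ = 0 → Ric Y Y = s / ((n : ℝ) - 1) := by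
  have hαX₀ : ∀ Z, α Z X₀ = 0 := fun Z => (hαsymm Z X₀).trans (hnull Z)
  set c : ℝ := - L X₀ X₀ with hc
  have hX₀X₀ : ⟪X₀, X₀⟫ = 1 := by
    rw [real_inner_self_eq_norm_sq, hX₀]; norm_num
  -- convert hCF to inner-product form
  have hCF' : ∀ X Y : V, ‖X‖ = 1 → ‖Y‖ = 1 → ⟪X, Y⟫ = 0 →
      L X X + L Y Y = ⟪α X X, α Y Y⟫ - ⟪α X Y, α X Y⟫ := by
    intro X Y h1 h2 h3
    rw [real_inner_self_eq_norm_sq]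
    exact hCF X Y h1 h2 h3
  have hLunit : ∀ U : V, ‖U‖ = 1 → ⟪X₀, U⟫ = 0 → L U U = c := by
    intro U hU hXU
    have h := hCF' X₀ U hX₀ hU hXU
    rw [hnull X₀, hnull U] at h
    simp at h
    linarith
  -- sectional identity, scaled in the second argument
  have hsec : ∀ U : V, ‖U‖ = 1 → ⟪X₀, U⟫ = 0 → ∀ Z : V, ⟪X₀, Z⟫ = 0 → ⟪U, Z⟫ = 0 →
      ⟪α U U, α Z Z⟫ - ⟪α U Z, α U Z⟫ = 2 * c * ⟪Z, Z⟫ := by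
    intro U hU hXU Z hXZ hUZ
    rcases eq_or_ne Z 0 with rfl | hZ
    · simp
    · set t : ℝ := ‖Z‖⁻¹ with ht
      have hZ' : ‖t • Z‖ = 1 := norm_smul_inv_norm hZ
      have h1 : ⟪X₀, t • Z⟫ = 0 := by rw [real_inner_smul_right, hXZ]; ring
      have h2 : ⟪U, t • Z⟫ = 0 := by rw [real_inner_smul_right, hUZ]; ring
      have h := hCF' U (t • Z) hU hZ' h2
      rw [hLunit U hU hXU, hLunit _ hZ' h1] at h
      have e1 : α (t • Z) (t • Z) = (t * t) • α Z Z := by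
        simp [map_smul, smul_smul]
      have e2 : α U (t • Z) = t • α U Z := by rw [map_smul]
      rw [e1, e2, real_inner_smul_right, real_inner_smul_left, real_inner_smul_right] at h
      have ht2 : t * t * ⟪Z, Z⟫ = 1 := by
        have hZn : ‖Z‖ ≠ 0 := norm_ne_zero_iff.mpr hZ
        rw [real_inner_self_eq_norm_sq, ht]
        field_simp
      linear_combination (-⟪Z, Z⟫) * h + (-(⟪α U U, α Z Z⟫ - ⟪α U Z, α U Z⟫)) * ht2
  have hUbasis1 : ∑ j, ⟪b j, b j⟫ = (n : ℝ) := by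
    have e : ∀ j, ⟪b j, b j⟫ = (1:ℝ) := by
      intro j
      rw [real_inner_self_eq_norm_sq, b.orthonormal.1 j]; norm_num
    rw [Finset.sum_congr rfl (fun j _ => e j)]
    simp
  have hParseval : ∀ x : V, ‖x‖ = 1 → ∑ j, ⟪x, b j⟫ ^ 2 = 1 := by
    intro x hx
    have h := b.sum_inner_mul_inner x x
    rw [real_inner_self_eq_norm_sq, hx] at h
    norm_num at h
    rw [← h]
    apply Finset.sum_congr rfl
    intro j _
    rw [real_inner_comm x (b j)]
    ring
  -- the Ricci sum for a unit vector orthogonal to X₀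
  have hQsum : ∀ U : V, ‖U‖ = 1 → ⟪X₀, U⟫ = 0 →
      ∑ j, (⟪α U U, α (b j) (b j)⟫ - ⟪α U (b j), α U (b j)⟫) = 2 * c * ((n:ℝ) - 2) := by
    intro U hU hXU
    have hUU : ⟪U, U⟫ = 1 := by rw [real_inner_self_eq_norm_sq, hU]; norm_num
    have key : ∀ j, ⟪α U U, α (b j) (b j)⟫ - ⟪α U (b j), α U (b j)⟫
        = 2 * c * (⟪b j, b j⟫ - ⟪X₀, b j⟫ ^ 2 - ⟪U, b j⟫ ^ 2) := by
      intro j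
      set a : ℝ := ⟪X₀, b j⟫ with ha
      set u : ℝ := ⟪U, b j⟫ with hu
      set w : V := b j - a • X₀ - u • U with hw
      have hbj : b j = a • X₀ + u • U + w := by rw [hw]; abel
      have hwX : ⟪X₀, w⟫ = 0 := by
        rw [hw, inner_sub_right, inner_sub_right, real_inner_smul_right,
          real_inner_smul_right, hX₀X₀, hXU, ← ha]
        ring
      have hwU : ⟪U, w⟫ = 0 := by
        rw [hw, inner_sub_right, inner_sub_right, real_inner_smul_right,
          real_inner_smul_right, hUU, real_inner_comm X₀ U, hXU, ← hu]
        ring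
      have hαw : α U (b j) = u • α U U + α U w := by
        conv_lhs => rw [hbj]
        simp [map_add, map_smul, hαX₀]
      have hαbb : α (b j) (b j) = (u*u) • α U U + ((2:ℝ)*u) • α U w + α w w := by
        conv_lhs => rw [hbj]
        simp only [map_add, map_smul, LinearMap.add_apply, LinearMap.smul_apply, hnull,
          hαX₀, hαsymm w U, smul_zero, zero_add, add_zero, zero_smul, smul_smul]
        module
      have hterm : ⟪α U U, α (b j) (b j)⟫ - ⟪α U (b j), α U (b j)⟫
          = ⟪α U U, α w w⟫ - ⟪α U w, α U w⟫ := by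
        rw [hαbb, hαw]
        rw [inner_add_right, inner_add_right, real_inner_smul_right, real_inner_smul_right,
          inner_add_left, inner_add_right, inner_add_right, real_inner_smul_left,
          real_inner_smul_right, real_inner_smul_right, real_inner_smul_left,
          real_inner_comm (α U U) (α U w)]
        ring
      have hww : ⟪w, w⟫ = ⟪b j, b j⟫ - a ^ 2 - u ^ 2 := by
        simp only [hw, inner_sub_left, inner_sub_right, real_inner_smul_left,
          real_inner_smul_right, real_inner_comm X₀ (b j), real_inner_comm U (b j),
          real_inner_comm X₀ U, hX₀X₀, hUU, hXU, ← ha, ← hu]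
        ring
      rw [hterm, hsec U hU hXU w hwX hwU, hww]
    rw [Finset.sum_congr rfl (fun j _ => key j), ← Finset.mul_sum]
    have : ∑ j, (⟪b j, b j⟫ - ⟪X₀, b j⟫ ^ 2 - ⟪U, b j⟫ ^ 2)
        = (n:ℝ) - 1 - 1 := by
      rw [Finset.sum_sub_distrib, Finset.sum_sub_distrib, hUbasis1,
        hParseval X₀ hX₀, hParseval U hU]
    rw [this]
    ring
  -- scaled version for any vector orthogonal to X₀
  have hQsum' : ∀ v : V, ⟪X₀, v⟫ = 0 →
      ∑ j, (⟪α v v, α (b j) (b j)⟫ - ⟪α v (b j), α v (b j)⟫)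
        = 2 * c * ((n:ℝ) - 2) * ⟪v, v⟫ := by
    intro v hv
    rcases eq_or_ne v 0 with rfl | hv0
    · simp
    · set t : ℝ := ‖v‖⁻¹ with ht
      have h1 : ‖t • v‖ = 1 := norm_smul_inv_norm hv0
      have h2 : ⟪X₀, t • v⟫ = 0 := by rw [real_inner_smul_right, hv]; ring
      have h := hQsum (t • v) h1 h2
      have e : ∀ j, ⟪α (t • v) (t • v), α (b j) (b j)⟫ - ⟪α (t • v) (b j), α (t • v) (b j)⟫
          = t * t * (⟪α v v, α (b j) (b j)⟫ - ⟪α v (b j), α v (b j)⟫) := by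
        intro j
        have e1 : α (t • v) (t • v) = (t * t) • α v v := by
          simp [map_smul, smul_smul]
        have e2 : α (t • v) (b j) = t • α v (b j) := by
          simp [map_smul]
        rw [e1, e2, real_inner_smul_left, real_inner_smul_left, real_inner_smul_right]
        ring
      rw [Finset.sum_congr rfl (fun j _ => e j), ← Finset.mul_sum] at h
      have ht2 : t * t * ⟪v, v⟫ = 1 := by
        have hvn : ‖v‖ ≠ 0 := norm_ne_zero_iff.mpr hv0
        rw [real_inner_self_eq_norm_sq, ht]
        field_simp
      linear_combination ⟪v, v⟫ * h
        - (∑ j, (⟪α v v, α (b j) (b j)⟫ - ⟪α v (b j), α v (b j)⟫)) * ht2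
  -- Ric as a quadratic expression in α
  have hRicQ : ∀ U : V, Ric U U
      = ∑ j, (⟪α U U, α (b j) (b j)⟫ - ⟪α U (b j), α U (b j)⟫) := by
    intro U
    rw [hRic]
    apply Finset.sum_congr rfl
    intro j _
    rw [hR, hαsymm (b j) U]
  -- value of the scalar curvature
  have hsval : s = 2 * c * ((n:ℝ) - 2) * ((n:ℝ) - 1) := by
    rw [hs]
    have e : ∀ i, Ric (b i) (b i) = 2 * c * ((n:ℝ) - 2) * (1 - ⟪X₀, b i⟫ ^ 2) := by
      intro i
      set v : V := b i - ⟪X₀, b i⟫ • X₀ with hv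
      have hvX : ⟪X₀, v⟫ = 0 := by
        rw [hv, inner_sub_right, real_inner_smul_right, hX₀X₀]
        ring
      have hαb : ∀ Z, α (b i) Z = α v Z := by
        intro Z
        rw [hv, map_sub, map_smul, LinearMap.sub_apply, LinearMap.smul_apply, hnull]
        simp
      have hbb : ⟪b i, b i⟫ = 1 := by
        rw [real_inner_self_eq_norm_sq, b.orthonormal.1 i]; norm_num
      have hvv : ⟪v, v⟫ = 1 - ⟪X₀, b i⟫ ^ 2 := by
        rw [hv, inner_sub_left, inner_sub_right, inner_sub_right, real_inner_smul_left,
          real_inner_smul_left, real_inner_smul_right, real_inner_smul_right,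
          hX₀X₀, hbb, real_inner_comm X₀ (b i)]
        ring
      have hvbi : α v v = α (b i) (b i) := by
        conv_rhs => rw [show (b i) = ⟪X₀, b i⟫ • X₀ + v by rw [hv]; abel]
        simp [map_add, map_smul, LinearMap.add_apply, LinearMap.smul_apply, hnull, hαX₀]
      have e2 : ∀ j, ⟪α (b i) (b i), α (b j) (b j)⟫ - ⟪α (b i) (b j), α (b i) (b j)⟫
          = ⟪α v v, α (b j) (b j)⟫ - ⟪α v (b j), α v (b j)⟫ := by
        intro j
        rw [← hvbi, hαb (b j)]
      rw [hRicQ, Finset.sum_congr rfl (fun j _ => e2 j), hQsum' v hvX, hvv]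
    rw [Finset.sum_congr rfl (fun i _ => e i), ← Finset.mul_sum]
    have : ∑ i, (1 - ⟪X₀, b i⟫ ^ 2) = (n:ℝ) - 1 := by
      rw [Finset.sum_sub_distrib, hParseval X₀ hX₀]
      simp
    rw [this]
  -- conclusion
  intro Y hY hXY
  have h1 : Ric Y Y = 2 * c * ((n:ℝ) - 2) := by
    rw [hRicQ]; exact hQsum Y hY hXY
  have hn1 : (n:ℝ) - 1 ≠ 0 := by
    have h3 : (3:ℝ) ≤ (n:ℝ) := by exact_mod_cast hn
    intro h; linarith
  rw [h1, hsval]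
  field_simp
end

section
/- Let V be an n-dimensional real inner product space (n ≥ 3), W a real inner product space, and α : V × V → W a symmetric bilinear map whose curvature tensor R(X,Y,Z,T) = ⟨α(X,T),α(Y,Z)⟩ − ⟨α(X,Z),α(Y,T)⟩ has the conformally flat form R(X,Y,Z,T) = L(X,T)⟨Y,Z⟩ − L(X,Z)⟨Y,T⟩ + L(Y,Z)⟨X,T⟩ − L(Y,T)⟨X,Z⟩ for some symmetric bilinear form L. If the relative nullity space Δ = {X ∈ V : α(X,·) = 0} has dimension at least 2, then the scalar curvature s = 0 and Ric ≡ 0, and hence R ≡ 0. -/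
open scoped RealInnerProductSpace

set_option maxHeartbeats 1000000 in
theorem stmt_5 {V W : Type*} [NormedAddCommGroup V] [InnerProductSpace ℝ V]
    [NormedAddCommGroup W] [InnerProductSpace ℝ W]
    (n : ℕ) (hn : 3 ≤ n) (b : OrthonormalBasis (Fin n) ℝ V)
    (α : V →ₗ[ℝ] V →ₗ[ℝ] W) (hαsymm : ∀ x y, α x y = α y x)
    (R : V → V → V → V → ℝ)
    (hR : ∀ X Y Z T, R X Y Z T = ⟪α X T, α Y Z⟫ - ⟪α X Z, α Y T⟫)
    (L : V →ₗ[ℝ] V →ₗ[ℝ] ℝ) (hLsymm : ∀ x y, L x y = L y x)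
    (hCF : ∀ X Y Z T : V, R X Y Z T =
      L X T * ⟪Y, Z⟫ - L X Z * ⟪Y, T⟫ + L Y Z * ⟪X, T⟫ - L Y T * ⟪X, Z⟫)
    (Ric : V → V → ℝ)
    (hRic : ∀ X Y, Ric X Y = ∑ j, R X (b j) (b j) Y)
    (s : ℝ) (hs : s = ∑ j, Ric (b j) (b j))
    (hΔ : 2 ≤ Module.finrank ℝ (LinearMap.ker α)) :
    s = 0 ∧ (∀ X Y : V, Ric X Y = 0) ∧ (∀ X Y Z T : V, R X Y Z T = 0) := by
  classical
  have hfd : FiniteDimensional ℝ V := Module.Finite.of_basis b.toBasis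
  have hnV : Module.finrank ℝ V = n := by
    rw [Module.finrank_eq_card_basis b.toBasis, Fintype.card_fin]
  -- key identity for vectors in the kernel
  have key : ∀ X Y Z T : V, α X = 0 →
      L X T * ⟪Y, Z⟫ - L X Z * ⟪Y, T⟫ + L Y Z * ⟪X, T⟫ - L Y T * ⟪X, Z⟫ = 0 := by
    intro X Y Z T hX
    have h2 := hCF X Y Z T
    rw [hR X Y Z T, hX] at h2
    simp only [LinearMap.zero_apply, inner_zero_left, sub_zero, zero_sub, sub_self] at h2
    linarith
  -- orthonormal pair in the kernel
  set K := LinearMap.ker α with hKdef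
  let obK := stdOrthonormalBasis ℝ K
  set X₁ : V := ((obK ⟨0, by omega⟩ : K) : V) with hX1def
  set X₂ : V := ((obK ⟨1, by omega⟩ : K) : V) with hX2def
  have hα1 : α X₁ = 0 := (LinearMap.mem_ker).mp (obK ⟨0, by omega⟩).2
  have hα2 : α X₂ = 0 := (LinearMap.mem_ker).mp (obK ⟨1, by omega⟩).2
  have hob := orthonormal_iff_ite.mp obK.orthonormal
  have h11 : ⟪X₁, X₁⟫ = 1 := by
    have := hob ⟨0, by omega⟩ ⟨0, by omega⟩
    rw [Submodule.coe_inner, ← hX1def] at this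
    simpa using this
  have h22 : ⟪X₂, X₂⟫ = 1 := by
    have := hob ⟨1, by omega⟩ ⟨1, by omega⟩
    rw [Submodule.coe_inner, ← hX2def] at this
    simpa using this
  have h12 : ⟪X₁, X₂⟫ = 0 := by
    have := hob ⟨0, by omega⟩ ⟨1, by omega⟩
    rw [Submodule.coe_inner, ← hX1def, ← hX2def] at this
    simpa using this
  have h21 : ⟪X₂, X₁⟫ = 0 := by rw [real_inner_comm]; exact h12
  -- a unit vector orthogonal to both X₁ and X₂
  obtain ⟨e, he1, he2, hee⟩ : ∃ e : V, ⟪X₁, e⟫ = 0 ∧ ⟪X₂, e⟫ = 0 ∧ ⟪e, e⟫ = 1 := by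
    have hcard : Module.finrank ℝ (Submodule.span ℝ ({X₁, X₂} : Set V)) ≤ 2 := by
      refine le_trans (finrank_span_le_card _) ?_
      rw [Set.toFinset_insert, Set.toFinset_singleton]
      exact le_trans (Finset.card_insert_le _ _) (by simp)
    have hrank : 0 < Module.finrank ℝ (Submodule.span ℝ ({X₁, X₂} : Set V))ᗮ := by
      have := Submodule.finrank_add_finrank_orthogonal
        (Submodule.span ℝ ({X₁, X₂} : Set V))
      rw [hnV] at this
      omega
    have hSne : (Submodule.span ℝ ({X₁, X₂} : Set V))ᗮ ≠ ⊥ := by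
      intro h
      rw [h] at hrank
      simp at hrank
    obtain ⟨v, hvS, hv0⟩ := Submodule.exists_mem_ne_zero_of_ne_bot hSne
    refine ⟨‖v‖⁻¹ • v, ?_, ?_, ?_⟩
    · rw [real_inner_smul_right]
      rw [Submodule.mem_orthogonal] at hvS
      rw [hvS X₁ (Submodule.subset_span (by simp))]
      ring
    · rw [real_inner_smul_right]
      rw [Submodule.mem_orthogonal] at hvS
      rw [hvS X₂ (Submodule.subset_span (by simp))]
      ring
    · have hne : ‖(‖v‖⁻¹ • v)‖ = 1 := norm_smul_inv_norm hv0
      rw [real_inner_self_eq_norm_mul_norm, hne, mul_one]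
  have he1' : ⟪e, X₁⟫ = 0 := by rw [real_inner_comm]; exact he1
  have he2' : ⟪e, X₂⟫ = 0 := by rw [real_inner_comm]; exact he2
  -- L X₁ X₁ = 0
  have k1 := key X₁ X₂ X₂ X₁ hα1
  rw [h22, h11, h21, h12] at k1
  have k2 := key X₁ e e X₁ hα1
  rw [hee, h11, he1', he1] at k2
  have k3 := key X₂ e e X₂ hα2
  rw [hee, h22, he2', he2] at k3
  have hL11 : L X₁ X₁ = 0 := by
    have e1 := hLsymm X₁ X₂
    have e2 := hLsymm X₁ e
    have e3 := hLsymm X₂ e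
    linarith [k1, k2, k3]
  have hL22 : L X₂ X₂ = 0 := by linarith [k1, hL11]
  -- L X₁ X₂ = 0
  have k4 := key X₁ e X₂ e hα1
  rw [hee, he2', h12, he1] at k4
  have hL12 : L X₁ X₂ = 0 := by
    have := hLsymm X₂ e
    linarith [k4]
  -- L X₁ Z = 0 for all Z
  have hL1 : ∀ Z : V, L X₁ Z = 0 := by
    intro Z
    have k5 := key X₁ X₂ Z X₂ hα1
    rw [h22, h12, hL12, hL22] at k5
    linarith
  -- L Y Y = 0 for all Y
  have hLdiag : ∀ Y : V, L Y Y = 0 := by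
    intro Y
    have k6 := key X₁ Y Y X₁ hα1
    rw [h11, hL11, hLsymm Y X₁, hL1 Y] at k6
    linarith
  -- L = 0 by polarization
  have hL0 : ∀ Y Z : V, L Y Z = 0 := by
    intro Y Z
    have h1 := hLdiag (Y + Z)
    have h2 := hLdiag Y
    have h3 := hLdiag Z
    have h4 := hLsymm Y Z
    simp only [map_add, LinearMap.add_apply] at h1
    linarith
  have hR0 : ∀ X Y Z T : V, R X Y Z T = 0 := by
    intro X Y Z T
    rw [hCF, hL0, hL0, hL0, hL0]
    ring
  have hRic0 : ∀ X Y : V, Ric X Y = 0 := by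
    intro X Y
    rw [hRic]
    simp [hR0]
  refine ⟨?_, hRic0, hR0⟩
  rw [hs]
  simp [hRic0]
end

section
/- Let V be an n-dimensional real inner product space (n ≥ 3), α : V × V → W a symmetric bilinear map whose Gauss curvature tensor is conformally flat with Schouten tensor L. Suppose the relative nullity space Δ = ker α is one-dimensional, spanned by a unit vector X. Then with h := s/(2(n−1)(n−2)) (s the scalar curvature): L(Y,Y) = h and L(X,X) = −h for every unit vector Y ⟂ X, and L(X,Y) = 0 for all Y ⟂ X. -/
open scoped RealInnerProductSpace

theorem stmt_6 {V W : Type*} [NormedAddCommGroup V] [InnerProductSpace ℝ V]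
    [NormedAddCommGroup W] [InnerProductSpace ℝ W]
    (n : ℕ) (hn : 3 ≤ n) (b : OrthonormalBasis (Fin n) ℝ V)
    (α : V →ₗ[ℝ] V →ₗ[ℝ] W) (hαsymm : ∀ x y, α x y = α y x)
    (R : V → V → V → V → ℝ)
    (hR : ∀ X Y Z T, R X Y Z T = ⟪α X T, α Y Z⟫ - ⟪α X Z, α Y T⟫)
    (L : V →ₗ[ℝ] V →ₗ[ℝ] ℝ) (hLsymm : ∀ x y, L x y = L y x)
    (hCF : ∀ X Y Z T : V, R X Y Z T =
      L X T * ⟪Y, Z⟫ - L X Z * ⟪Y, T⟫ + L Y Z * ⟪X, T⟫ - L Y T * ⟪X, Z⟫)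
    (Ric : V → V → ℝ)
    (hRic : ∀ X Y, Ric X Y = ∑ j, R X (b j) (b j) Y)
    (s : ℝ) (hs : s = ∑ j, Ric (b j) (b j))
    (X : V) (hX : ‖X‖ = 1) (hΔ : LinearMap.ker α = Submodule.span ℝ {X})
    (h : ℝ) (hh : h = s / (2 * ((n : ℝ) - 1) * ((n : ℝ) - 2))) :
    (∀ Y : V, ‖Y‖ = 1 → ⟪X, Y⟫ = 0 → L Y Y = h) ∧
    L X X = -h ∧
    (∀ Y : V, ⟪X, Y⟫ = 0 → L X Y = 0) := by
  classical
  have hfd : FiniteDimensional ℝ V := b.toBasis.finiteDimensional_of_finite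
  have hrank : Module.finrank ℝ V = n := by
    rw [Module.finrank_eq_card_basis b.toBasis, Fintype.card_fin]
  have hXX : ⟪X, X⟫ = (1 : ℝ) := by
    rw [real_inner_self_eq_norm_sq, hX]; norm_num
  have hα0 : ∀ v, α X v = 0 := by
    intro v
    have hXmem : X ∈ LinearMap.ker α := by
      rw [hΔ]; exact Submodule.mem_span_singleton_self X
    have hz : α X = 0 := hXmem
    rw [hz]; rfl
  -- key identity from R X Y Z T = 0
  have key : ∀ Y Z T : V,
      L X T * ⟪Y, Z⟫ - L X Z * ⟪Y, T⟫ + L Y Z * ⟪X, T⟫ - L Y T * ⟪X, Z⟫ = 0 := by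
    intro Y Z T
    have h1 := hR X Y Z T
    have h2 := hCF X Y Z T
    rw [hα0, hα0] at h1
    simp only [inner_zero_left, sub_zero] at h1
    rw [h1] at h2
    linarith
  -- existence of unit vector orthogonal to two given ones
  have hexists : ∀ u t : V, ∃ y : V, ‖y‖ = 1 ∧ ⟪u, y⟫ = 0 ∧ ⟪t, y⟫ = 0 := by
    intro u t
    have hspan : Module.finrank ℝ (Submodule.span ℝ {u, t}) ≤ 2 := by
      have h1 := finrank_span_finset_le_card (R := ℝ) ({u, t} : Finset V)
      have h2 : (({u, t} : Finset V) : Set V) = {u, t} := by simp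
      rw [Set.finrank, h2] at h1
      exact h1.trans ((Finset.card_insert_le _ _).trans (by simp))
    have hne : (Submodule.span ℝ {u, t})ᗮ ≠ ⊥ := by
      intro hbot
      have h2 := Submodule.finrank_add_finrank_orthogonal
        (K := Submodule.span ℝ ({u, t} : Set V))
      rw [hbot] at h2
      simp [hrank] at h2
      omega
    obtain ⟨v, hv, hv0⟩ := Submodule.exists_mem_ne_zero_of_ne_bot hne
    refine ⟨‖v‖⁻¹ • v, ?_, ?_, ?_⟩
    · rw [norm_smul]; simp [norm_ne_zero_iff.2 hv0]
    · rw [inner_smul_right]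
      have := (Submodule.mem_orthogonal _ v).1 hv u (Submodule.subset_span (by simp))
      simp [this]
    · rw [inner_smul_right]
      have := (Submodule.mem_orthogonal _ v).1 hv t (Submodule.subset_span (by simp))
      simp [this]
  set a : ℝ := - L X X with ha
  -- conclusion 3
  have lemB : ∀ T : V, ⟪X, T⟫ = 0 → L X T = 0 := by
    intro T hT
    obtain ⟨Y, hY1, hYX, hYT⟩ := hexists X T
    have hk := key Y Y T
    have hYY : ⟪Y, Y⟫ = (1 : ℝ) := by
      rw [real_inner_self_eq_norm_sq, hY1]; norm_num
    have hYT' : ⟪Y, T⟫ = 0 := by rw [real_inner_comm]; exact hYT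
    rw [hYY, hYT', hT, hYX] at hk
    linarith
  -- L on the orthogonal complement of X
  have lemA : ∀ Y Z : V, ⟪X, Y⟫ = 0 → ⟪X, Z⟫ = 0 → L Y Z = a * ⟪Y, Z⟫ := by
    intro Y Z hY hZ
    have hk := key Y Z X
    have hYX : ⟪Y, X⟫ = 0 := by rw [real_inner_comm]; exact hY
    rw [hXX, hYX, hZ] at hk
    rw [ha]; linarith
  -- diagonal formula for L
  have lemC : ∀ u : V, L u u = a * ⟪u, u⟫ - 2 * a * (⟪X, u⟫ * ⟪X, u⟫) := by
    intro u
    set c : ℝ := ⟪X, u⟫ with hc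
    set u' : V := u - c • X with hu'
    have hcu' : ⟪X, u'⟫ = 0 := by
      rw [hu', inner_sub_right, inner_smul_right, hXX]
      simp [hc]
    have hdecomp : u = c • X + u' := by rw [hu']; abel
    have hLu : L u u = c * c * L X X + c * L X u' + c * L u' X + L u' u' := by
      conv_lhs => rw [hdecomp]
      simp only [map_add, map_smul, LinearMap.add_apply, LinearMap.smul_apply,
        smul_eq_mul]
      ring
    have h1 : L X u' = 0 := lemB u' hcu'
    have h2 : L u' X = 0 := by rw [hLsymm]; exact h1
    have h3 : L u' u' = a * ⟪u', u'⟫ := lemA u' u' hcu' hcu'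
    have hux : ⟪u, X⟫ = c := by rw [real_inner_comm]
    have h4 : ⟪u', u'⟫ = ⟪u, u⟫ - c * c := by
      rw [hu', inner_sub_sub_self, real_inner_smul_left, real_inner_smul_right,
        real_inner_smul_left, real_inner_smul_right, hXX, hux, ← hc]
      ring
    rw [hLu, h1, h2, h3, h4]
    have hLXXa : L X X = -a := by rw [ha]; ring
    rw [hLXXa]
    ring
  -- orthonormality
  have hb : ∀ i j, ⟪b i, b j⟫ = if i = j then (1 : ℝ) else 0 :=
    orthonormal_iff_ite.mp b.orthonormal
  set t : ℝ := ∑ j, L (b j) (b j) with htdef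
  -- trace of L
  have ht : t = a * (n : ℝ) - 2 * a := by
    have hpars : ∑ j, ⟪X, b j⟫ * ⟪X, b j⟫ = 1 := by
      have hp := b.sum_inner_mul_inner X X
      rw [hXX] at hp
      rw [← hp]
      exact Finset.sum_congr rfl fun j _ => by rw [real_inner_comm X (b j)]
    calc t = ∑ j, (a * ⟪b j, b j⟫ - 2 * a * (⟪X, b j⟫ * ⟪X, b j⟫)) :=
          Finset.sum_congr rfl fun j _ => lemC (b j)
      _ = ∑ j, (a - 2 * a * (⟪X, b j⟫ * ⟪X, b j⟫)) :=
          Finset.sum_congr rfl fun j _ => by rw [hb j j]; simp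
      _ = (∑ _j : Fin n, a) - ∑ j, 2 * a * (⟪X, b j⟫ * ⟪X, b j⟫) :=
          Finset.sum_sub_distrib _ _
      _ = (n : ℝ) * a - 2 * a * ∑ j, ⟪X, b j⟫ * ⟪X, b j⟫ := by
          rw [Finset.sum_const, Finset.card_univ, Fintype.card_fin, nsmul_eq_mul,
            ← Finset.mul_sum]
      _ = a * (n : ℝ) - 2 * a := by rw [hpars]; ring
  -- Ricci diagonal
  have hinner : ∀ j, (∑ k, R (b j) (b k) (b k) (b j))
      = ((n : ℝ) - 2) * L (b j) (b j) + t := by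
    intro j
    calc (∑ k, R (b j) (b k) (b k) (b j))
        = ∑ k, (L (b j) (b j) + L (b k) (b k)
            - if k = j then 2 * L (b j) (b j) else 0) := by
          refine Finset.sum_congr rfl fun k _ => ?_
          rw [hCF, hb k k, hb k j, hb j k, hb j j]
          by_cases hkj : k = j
          · subst hkj; simp; ring
          · have hjk : ¬ j = k := fun hh => hkj hh.symm
            simp [hkj, hjk]
      _ = (∑ k, (L (b j) (b j) + L (b k) (b k)))
            - ∑ k, (if k = j then 2 * L (b j) (b j) else 0) :=
          Finset.sum_sub_distrib _ _
      _ = ((n : ℝ) * L (b j) (b j) + t) - 2 * L (b j) (b j) := by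
          rw [Finset.sum_add_distrib, Finset.sum_const, Finset.card_univ,
            Fintype.card_fin, nsmul_eq_mul, Finset.sum_ite_eq' Finset.univ j
              (fun _ => 2 * L (b j) (b j))]
          simp [htdef]
      _ = ((n : ℝ) - 2) * L (b j) (b j) + t := by ring
  -- scalar curvature
  have hsval : s = 2 * ((n : ℝ) - 1) * ((n : ℝ) - 2) * a := by
    have : s = ∑ j, (((n : ℝ) - 2) * L (b j) (b j) + t) := by
      rw [hs]
      exact Finset.sum_congr rfl fun j _ => by rw [hRic]; exact hinner j
    rw [this, Finset.sum_add_distrib, ← Finset.mul_sum, ← htdef, Finset.sum_const,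
      Finset.card_univ, Fintype.card_fin, nsmul_eq_mul, ht]
    ring
  have hn3 : (3 : ℝ) ≤ (n : ℝ) := by exact_mod_cast hn
  have hne1 : (n : ℝ) - 1 ≠ 0 := by linarith
  have hne2 : (n : ℝ) - 2 ≠ 0 := by linarith
  have hha : h = a := by
    rw [hh, hsval]
    field_simp
  refine ⟨?_, ?_, lemB⟩
  · intro Y hY1 hY2
    have hYY : ⟪Y, Y⟫ = (1 : ℝ) := by
      rw [real_inner_self_eq_norm_sq, hY1]; norm_num
    rw [lemA Y Y hY2 hY2, hYY, hha]; ring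
  · rw [hha, ha]; ring
end

section
/- Let (M, g) be a Riemannian product M = M₁ × M₂ of Riemannian manifolds with dim M₁ ≥ 2 and dim M₂ ≥ 2, where M₁ has constant sectional curvature c₁ and M₂ has constant sectional curvature c₂. If M is conformally flat (equivalently, its Weyl tensor vanishes for dim M ≥ 4, and its curvature tensor is the Kulkarni–Nomizu product of g with its Schouten tensor), then either c₁ = c₂ = 0 or c₁ = −c₂. -/
open scoped RealInnerProductSpace

/-- Algebraic (curvature-tensor) formulation of Proposition 4 for a Riemannian
product `M = M₁ × M₂` with factors of constant sectional curvatures `c₁, c₂` and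
both factors of dimension at least `2`: at a point, the tangent space splits as an
orthogonal direct sum `V = V₁ ⊕ V₂`, the curvature tensor is the direct sum of the
constant-curvature tensors, and conformal flatness means the curvature tensor is
the Kulkarni–Nomizu product of the metric with the Schouten tensor
`L = (1/(n−2))(Ric − (s/(2(n−1)))g)`. Conclusion: `c₁ = c₂ = 0` or `c₁ = −c₂`. -/
theorem stmt_11 {V : Type*} [NormedAddCommGroup V] [InnerProductSpace ℝ V]
    [FiniteDimensional ℝ V]
    (n : ℕ) (hn : 4 ≤ n) (b : OrthonormalBasis (Fin n) ℝ V)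
    (V₁ V₂ : Submodule ℝ V) (hcompl : IsCompl V₁ V₂)
    (horth : ∀ x ∈ V₁, ∀ y ∈ V₂, ⟪x, y⟫ = 0)
    (hd1 : 2 ≤ Module.finrank ℝ V₁) (hd2 : 2 ≤ Module.finrank ℝ V₂)
    (c₁ c₂ : ℝ)
    (R : V → V → V → V → ℝ)
    (hR : ∀ X Y Z T, R X Y Z T =
      c₁ * (⟪(Submodule.orthogonalProjectionOnto V₁ X : V), (Submodule.orthogonalProjectionOnto V₁ T : V)⟫ *
              ⟪(Submodule.orthogonalProjectionOnto V₁ Y : V), (Submodule.orthogonalProjectionOnto V₁ Z : V)⟫ -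
            ⟪(Submodule.orthogonalProjectionOnto V₁ X : V), (Submodule.orthogonalProjectionOnto V₁ Z : V)⟫ *
              ⟪(Submodule.orthogonalProjectionOnto V₁ Y : V), (Submodule.orthogonalProjectionOnto V₁ T : V)⟫) +
      c₂ * (⟪(Submodule.orthogonalProjectionOnto V₂ X : V), (Submodule.orthogonalProjectionOnto V₂ T : V)⟫ *
              ⟪(Submodule.orthogonalProjectionOnto V₂ Y : V), (Submodule.orthogonalProjectionOnto V₂ Z : V)⟫ -
            ⟪(Submodule.orthogonalProjectionOnto V₂ X : V), (Submodule.orthogonalProjectionOnto V₂ Z : V)⟫ *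
              ⟪(Submodule.orthogonalProjectionOnto V₂ Y : V), (Submodule.orthogonalProjectionOnto V₂ T : V)⟫))
    (Ric : V → V → ℝ)
    (hRic : ∀ X Y, Ric X Y = ∑ j, R X (b j) (b j) Y)
    (s : ℝ) (hs : s = ∑ j, Ric (b j) (b j))
    (L : V → V → ℝ)
    (hL : ∀ X Y, L X Y =
      (1 / ((n : ℝ) - 2)) * (Ric X Y - (s / (2 * ((n : ℝ) - 1))) * ⟪X, Y⟫))
    (hCF : ∀ X Y Z T : V, R X Y Z T =
      L X T * ⟪Y, Z⟫ - L X Z * ⟪Y, T⟫ + L Y Z * ⟪X, T⟫ - L Y T * ⟪X, Z⟫) :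
    (c₁ = 0 ∧ c₂ = 0) ∨ c₁ = -c₂ := by
  right
  -- orthonormal pairs in V₁ and V₂
  let B₁ := stdOrthonormalBasis ℝ V₁
  let B₂ := stdOrthonormalBasis ℝ V₂
  set x : V := ((B₁ ⟨0, by omega⟩ : V₁) : V) with hxdef
  set x' : V := ((B₁ ⟨1, by omega⟩ : V₁) : V) with hx'def
  set y : V := ((B₂ ⟨0, by omega⟩ : V₂) : V) with hydef
  set y' : V := ((B₂ ⟨1, by omega⟩ : V₂) : V) with hy'def
  have hxm : x ∈ V₁ := SetLike.coe_mem _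
  have hx'm : x' ∈ V₁ := SetLike.coe_mem _
  have hym : y ∈ V₂ := SetLike.coe_mem _
  have hy'm : y' ∈ V₂ := SetLike.coe_mem _
  have hxx : ⟪x, x⟫ = 1 := by
    have := (B₁.orthonormal).1 ⟨0, by omega⟩
    have h2 : ‖x‖ = 1 := by exact this
    rw [real_inner_self_eq_norm_sq, h2]; norm_num
  have hx'x' : ⟪x', x'⟫ = 1 := by
    have := (B₁.orthonormal).1 ⟨1, by omega⟩
    have h2 : ‖x'‖ = 1 := by exact this
    rw [real_inner_self_eq_norm_sq, h2]; norm_num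
  have hyy : ⟪y, y⟫ = 1 := by
    have := (B₂.orthonormal).1 ⟨0, by omega⟩
    have h2 : ‖y‖ = 1 := by exact this
    rw [real_inner_self_eq_norm_sq, h2]; norm_num
  have hy'y' : ⟪y', y'⟫ = 1 := by
    have := (B₂.orthonormal).1 ⟨1, by omega⟩
    have h2 : ‖y'‖ = 1 := by exact this
    rw [real_inner_self_eq_norm_sq, h2]; norm_num
  have hxx' : ⟪x, x'⟫ = 0 := by
    have := (B₁.orthonormal).2 (i := ⟨0, by omega⟩) (j := ⟨1, by omega⟩) (by simp)
    exact this
  have hx'x : ⟪x', x⟫ = 0 := by rw [real_inner_comm]; exact hxx'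
  have hyy' : ⟪y, y'⟫ = 0 := by
    have := (B₂.orthonormal).2 (i := ⟨0, by omega⟩) (j := ⟨1, by omega⟩) (by simp)
    exact this
  have hy'y : ⟪y', y⟫ = 0 := by rw [real_inner_comm]; exact hyy'
  have hxy : ⟪x, y⟫ = 0 := horth x hxm y hym
  have hyx : ⟪y, x⟫ = 0 := by rw [real_inner_comm]; exact hxy
  have hx'y' : ⟪x', y'⟫ = 0 := horth x' hx'm y' hy'm
  have hy'x' : ⟪y', x'⟫ = 0 := by rw [real_inner_comm]; exact hx'y'
  -- projections
  have hV2perp : ∀ v ∈ V₁, v ∈ V₂ᗮ := fun v hv =>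
    (Submodule.mem_orthogonal V₂ v).2 fun u hu => by
      rw [real_inner_comm]; exact horth v hv u hu
  have hV1perp : ∀ v ∈ V₂, v ∈ V₁ᗮ := fun v hv =>
    (Submodule.mem_orthogonal V₁ v).2 fun u hu => horth u hu v hv
  have p1 : ∀ v ∈ V₁, (Submodule.orthogonalProjectionOnto V₁ v : V) = v := fun v hv => by
    rw [Submodule.orthogonalProjectionOnto_mem_subspace_eq_self ⟨v, hv⟩]
  have p2 : ∀ v ∈ V₁, (Submodule.orthogonalProjectionOnto V₂ v : V) = 0 := fun v hv => by
    rw [Submodule.orthogonalProjectionOnto_apply_of_mem_orthogonal (hV2perp v hv)]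
    simp
  have q2 : ∀ v ∈ V₂, (Submodule.orthogonalProjectionOnto V₂ v : V) = v := fun v hv => by
    rw [Submodule.orthogonalProjectionOnto_mem_subspace_eq_self ⟨v, hv⟩]
  have q1 : ∀ v ∈ V₂, (Submodule.orthogonalProjectionOnto V₁ v : V) = 0 := fun v hv => by
    rw [Submodule.orthogonalProjectionOnto_apply_of_mem_orthogonal (hV1perp v hv)]
    simp
  -- curvature evaluations from hR
  have e1 : R x x' x' x = c₁ := by
    rw [hR, p1 x hxm, p1 x' hx'm, p2 x hxm, p2 x' hx'm]
    rw [hxx, hx'x', hxx', hx'x]; simp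
  have e2 : R y y' y' y = c₂ := by
    rw [hR, q2 y hym, q2 y' hy'm, q1 y hym, q1 y' hy'm]
    rw [hyy, hy'y', hyy', hy'y]; simp
  have e3 : R x y y x = 0 := by
    rw [hR, p1 x hxm, p2 x hxm, q2 y hym, q1 y hym]
    simp
  have e4 : R x' y' y' x' = 0 := by
    rw [hR, p1 x' hx'm, p2 x' hx'm, q2 y' hy'm, q1 y' hy'm]
    simp
  -- conformal flatness evaluations
  have f1 : c₁ = L x x + L x' x' := by
    rw [← e1, hCF]; rw [hxx, hx'x', hxx', hx'x]; ring
  have f2 : c₂ = L y y + L y' y' := by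
    rw [← e2, hCF]; rw [hyy, hy'y', hyy', hy'y]; ring
  have f3 : L x x + L y y = 0 := by
    have := hCF x y y x
    rw [e3] at this
    rw [hxx, hyy, hxy, hyx] at this
    linarith
  have f4 : L x' x' + L y' y' = 0 := by
    have := hCF x' y' y' x'
    rw [e4] at this
    rw [hx'x', hy'y', hx'y', hy'x'] at this
    linarith
  linarith
end

section
/- Algebraic version of Proposition 4 (product case): Let V = V₁ ⊕ V₂ be an orthogonal direct sum of real inner product spaces with dim V₁ = n₁ ≥ 2 and dim V₂ = n₂ ≥ 2, and let R be the algebraic curvature tensor that is the orthogonal direct sum of constant-curvature tensors of curvatures c₁ on V₁ and c₂ on V₂ (and R vanishes on mixed planes). If R has the conformally flat form, i.e., R(X,Y,Z,T) = L(X,T)⟨Y,Z⟩ − L(X,Z)⟨Y,T⟩ + L(Y,Z)⟨X,T⟩ − L(Y,T)⟨X,Z⟩ for some symmetric bilinear form L on V, then c₁ + c₂ = 0. -/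
open scoped RealInnerProductSpace

theorem stmt_12 {V : Type*} [NormedAddCommGroup V] [InnerProductSpace ℝ V]
    [FiniteDimensional ℝ V]
    (V₁ V₂ : Submodule ℝ V) (hcompl : IsCompl V₁ V₂)
    (horth : ∀ x ∈ V₁, ∀ y ∈ V₂, ⟪x, y⟫ = 0)
    (hd1 : 2 ≤ Module.finrank ℝ V₁) (hd2 : 2 ≤ Module.finrank ℝ V₂)
    (c₁ c₂ : ℝ)
    (R : V → V → V → V → ℝ)
    (hR : ∀ X Y Z T, R X Y Z T =
      c₁ * (⟪(Submodule.orthogonalProjectionOnto V₁ X : V), (Submodule.orthogonalProjectionOnto V₁ T : V)⟫ *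
              ⟪(Submodule.orthogonalProjectionOnto V₁ Y : V), (Submodule.orthogonalProjectionOnto V₁ Z : V)⟫ -
            ⟪(Submodule.orthogonalProjectionOnto V₁ X : V), (Submodule.orthogonalProjectionOnto V₁ Z : V)⟫ *
              ⟪(Submodule.orthogonalProjectionOnto V₁ Y : V), (Submodule.orthogonalProjectionOnto V₁ T : V)⟫) +
      c₂ * (⟪(Submodule.orthogonalProjectionOnto V₂ X : V), (Submodule.orthogonalProjectionOnto V₂ T : V)⟫ *
              ⟪(Submodule.orthogonalProjectionOnto V₂ Y : V), (Submodule.orthogonalProjectionOnto V₂ Z : V)⟫ -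
            ⟪(Submodule.orthogonalProjectionOnto V₂ X : V), (Submodule.orthogonalProjectionOnto V₂ Z : V)⟫ *
              ⟪(Submodule.orthogonalProjectionOnto V₂ Y : V), (Submodule.orthogonalProjectionOnto V₂ T : V)⟫))
    (L : V →ₗ[ℝ] V →ₗ[ℝ] ℝ) (hLsymm : ∀ x y, L x y = L y x)
    (hCF : ∀ X Y Z T : V, R X Y Z T =
      L X T * ⟪Y, Z⟫ - L X Z * ⟪Y, T⟫ + L Y Z * ⟪X, T⟫ - L Y T * ⟪X, Z⟫) :
    c₁ + c₂ = 0 := by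
  -- orthonormal vectors in V₁ and V₂
  set b₁ := stdOrthonormalBasis ℝ V₁ with hb₁
  set b₂ := stdOrthonormalBasis ℝ V₂ with hb₂
  set e₁ : V := (b₁ ⟨0, by omega⟩ : V) with he₁
  set e₂ : V := (b₁ ⟨1, by omega⟩ : V) with he₂
  set f₁ : V := (b₂ ⟨0, by omega⟩ : V) with hf₁
  set f₂ : V := (b₂ ⟨1, by omega⟩ : V) with hf₂
  have hme₁ : e₁ ∈ V₁ := (b₁ ⟨0, by omega⟩).2
  have hme₂ : e₂ ∈ V₁ := (b₁ ⟨1, by omega⟩).2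
  have hmf₁ : f₁ ∈ V₂ := (b₂ ⟨0, by omega⟩).2
  have hmf₂ : f₂ ∈ V₂ := (b₂ ⟨1, by omega⟩).2
  have hon₁ := orthonormal_iff_ite.mp b₁.orthonormal
  have hon₂ := orthonormal_iff_ite.mp b₂.orthonormal
  have hee₁ : ⟪e₁, e₁⟫ = 1 := by
    have := hon₁ ⟨0, by omega⟩ ⟨0, by omega⟩
    rw [Submodule.coe_inner] at this; exact this.trans (by simp)
  have hee₂ : ⟪e₂, e₂⟫ = 1 := by
    have := hon₁ ⟨1, by omega⟩ ⟨1, by omega⟩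
    rw [Submodule.coe_inner] at this; exact this.trans (by simp)
  have hee₁₂ : ⟪e₁, e₂⟫ = 0 := by
    have := hon₁ ⟨0, by omega⟩ ⟨1, by omega⟩
    rw [Submodule.coe_inner] at this; exact this.trans (by simp)
  have hff₁ : ⟪f₁, f₁⟫ = 1 := by
    have := hon₂ ⟨0, by omega⟩ ⟨0, by omega⟩
    rw [Submodule.coe_inner] at this; exact this.trans (by simp)
  have hff₂ : ⟪f₂, f₂⟫ = 1 := by
    have := hon₂ ⟨1, by omega⟩ ⟨1, by omega⟩
    rw [Submodule.coe_inner] at this; exact this.trans (by simp)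
  have hee₂₁ : ⟪e₂, e₁⟫ = 0 := by
    have := hon₁ ⟨1, by omega⟩ ⟨0, by omega⟩
    rw [Submodule.coe_inner] at this; exact this.trans (by simp)
  have hff₂₁ : ⟪f₂, f₁⟫ = 0 := by
    have := hon₂ ⟨1, by omega⟩ ⟨0, by omega⟩
    rw [Submodule.coe_inner] at this; exact this.trans (by simp)
  have hff₁₂ : ⟪f₁, f₂⟫ = 0 := by
    have := hon₂ ⟨0, by omega⟩ ⟨1, by omega⟩
    rw [Submodule.coe_inner] at this; exact this.trans (by simp)
  -- mixed inner products vanish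
  have hef : ∀ x ∈ V₁, ∀ y ∈ V₂, ⟪y, x⟫ = 0 := fun x hx y hy => by
    rw [real_inner_comm]; exact horth x hx y hy
  -- projections
  have hP1 : ∀ x ∈ V₁, (Submodule.orthogonalProjectionOnto V₁ x : V) = x := fun x hx =>
    congrArg _ (Submodule.orthogonalProjectionOnto_mem_subspace_eq_self (⟨x, hx⟩ : V₁))
  have hP2 : ∀ x ∈ V₂, (Submodule.orthogonalProjectionOnto V₂ x : V) = x := fun x hx =>
    congrArg _ (Submodule.orthogonalProjectionOnto_mem_subspace_eq_self (⟨x, hx⟩ : V₂))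
  have hP12 : ∀ x ∈ V₁, (Submodule.orthogonalProjectionOnto V₂ x : V) = 0 := by
    intro x hx
    have hxo : x ∈ V₂ᗮ := by
      intro y hy; exact hef x hx y hy
    rw [Submodule.orthogonalProjectionOnto_apply_of_mem_orthogonal hxo]
    simp
  have hP21 : ∀ x ∈ V₂, (Submodule.orthogonalProjectionOnto V₁ x : V) = 0 := by
    intro x hx
    have hxo : x ∈ V₁ᗮ := by
      intro y hy
      simpa [real_inner_comm] using horth y hy x hx
    rw [Submodule.orthogonalProjectionOnto_apply_of_mem_orthogonal hxo]
    simp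
  -- equation from (e₁, e₂, e₁, e₂)
  have E1 := (hR e₁ e₂ e₁ e₂).symm.trans (hCF e₁ e₂ e₁ e₂)
  rw [hP1 e₁ hme₁, hP1 e₂ hme₂, hP12 e₁ hme₁, hP12 e₂ hme₂] at E1
  simp only [hee₁, hee₂, hee₁₂, hee₂₁] at E1
  simp only [inner_zero_left, inner_zero_right] at E1
  -- equation from (f₁, f₂, f₁, f₂)
  have E2 := (hR f₁ f₂ f₁ f₂).symm.trans (hCF f₁ f₂ f₁ f₂)
  rw [hP2 f₁ hmf₁, hP2 f₂ hmf₂, hP21 f₁ hmf₁, hP21 f₂ hmf₂] at E2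
  simp only [hff₁, hff₂, hff₁₂, hff₂₁] at E2
  simp only [inner_zero_left, inner_zero_right] at E2
  -- equations from mixed planes
  have E3 := (hR e₁ f₁ e₁ f₁).symm.trans (hCF e₁ f₁ e₁ f₁)
  rw [hP1 e₁ hme₁, hP12 e₁ hme₁, hP2 f₁ hmf₁, hP21 f₁ hmf₁] at E3
  rw [hee₁, hff₁, horth e₁ hme₁ f₁ hmf₁, hef e₁ hme₁ f₁ hmf₁] at E3
  simp only [inner_zero_left, inner_zero_right] at E3
  have E4 := (hR e₂ f₂ e₂ f₂).symm.trans (hCF e₂ f₂ e₂ f₂)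
  rw [hP1 e₂ hme₂, hP12 e₂ hme₂, hP2 f₂ hmf₂, hP21 f₂ hmf₂] at E4
  rw [hee₂, hff₂, horth e₂ hme₂ f₂ hmf₂, hef e₂ hme₂ f₂ hmf₂] at E4
  simp only [inner_zero_left, inner_zero_right] at E4
  nlinarith [E1, E2, E3, E4]
end

section
/- Let V be an n-dimensional real inner product space (n ≥ 4), W an inner product space, α : V × V → W symmetric bilinear whose Gauss curvature tensor R is conformally flat with Schouten tensor L, and suppose the scalar curvature s of R is nonnegative and the relative nullity space Δ = ker α is nonzero. Then Ric(Y,Y) ≥ 0 for every Y ∈ V, i.e., the Ricci form of R is positive semidefinite. -/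
open scoped RealInnerProductSpace

theorem stmt_17 {V W : Type*} [NormedAddCommGroup V] [InnerProductSpace ℝ V]
    [NormedAddCommGroup W] [InnerProductSpace ℝ W]
    (n : ℕ) (hn : 4 ≤ n) (b : OrthonormalBasis (Fin n) ℝ V)
    (α : V →ₗ[ℝ] V →ₗ[ℝ] W) (hαsymm : ∀ x y, α x y = α y x)
    (R : V → V → V → V → ℝ)
    (hR : ∀ X Y Z T, R X Y Z T = ⟪α X T, α Y Z⟫ - ⟪α X Z, α Y T⟫)
    (L : V →ₗ[ℝ] V →ₗ[ℝ] ℝ) (hLsymm : ∀ x y, L x y = L y x)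
    (hCF : ∀ X Y Z T : V, R X Y Z T =
      L X T * ⟪Y, Z⟫ - L X Z * ⟪Y, T⟫ + L Y Z * ⟪X, T⟫ - L Y T * ⟪X, Z⟫)
    (Ric : V → V → ℝ)
    (hRic : ∀ X Y, Ric X Y = ∑ j, R X (b j) (b j) Y)
    (s : ℝ) (hs : s = ∑ j, Ric (b j) (b j)) (hsnn : 0 ≤ s)
    (hΔ : LinearMap.ker α ≠ ⊥) :
    ∀ Y : V, 0 ≤ Ric Y Y := by
  classical
  have hfd : FiniteDimensional ℝ V := Module.Finite.of_basis b.toBasis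
  have hfrV : Module.finrank ℝ V = n := by
    rw [Module.finrank_eq_card_basis b.toBasis, Fintype.card_fin]
  obtain ⟨v, hvker, hv0⟩ := (Submodule.ne_bot_iff _).mp hΔ
  have hαv : α v = 0 := LinearMap.mem_ker.mp hvker
  set u : V := (‖v‖⁻¹ : ℝ) • v with hu_def
  have hunorm : ‖u‖ = 1 := norm_smul_inv_norm hv0
  have hu1 : ⟪u, u⟫ = 1 := by
    rw [real_inner_self_eq_norm_sq, hunorm]; norm_num
  have hu0 : u ≠ 0 := by
    intro h; rw [h, norm_zero] at hunorm; norm_num at hunorm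
  have hαu : α u = 0 := by rw [hu_def, map_smul, hαv, smul_zero]
  have hα0 : ∀ X : V, α X u = 0 := fun X => by rw [hαsymm X u, hαu]; rfl
  have hRu : ∀ X Y T : V, R X Y u T = 0 := by
    intro X Y T
    rw [hR, hα0, hα0]
    simp
  -- existence of a vector orthogonal to u and X
  have exists_perp : ∀ X : V, ∃ y : V, y ≠ 0 ∧ ⟪u, y⟫ = 0 ∧ ⟪X, y⟫ = 0 := by
    intro X
    set K : Submodule ℝ V := Submodule.span ℝ {u, X} with hK_def
    have hKcard : Module.finrank ℝ K ≤ 2 := by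
      have h1 : Module.finrank ℝ K ≤ ({u, X} : Set V).toFinset.card :=
        finrank_span_le_card ({u, X} : Set V)
      refine h1.trans ?_
      have : ({u, X} : Set V).toFinset ⊆ {u, X} := by
        intro z hz
        simp only [Set.toFinset_insert, Set.toFinset_singleton] at hz
        exact hz
      calc ({u, X} : Set V).toFinset.card ≤ ({u, X} : Finset V).card :=
            Finset.card_le_card this
        _ ≤ 2 := Finset.card_insert_le _ _ |>.trans (by simp)
    have horth : Module.finrank ℝ K + Module.finrank ℝ Kᗮ = n := by
      rw [Submodule.finrank_add_finrank_orthogonal, hfrV]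
    have hpos : 0 < Module.finrank ℝ Kᗮ := by omega
    have hne : Kᗮ ≠ ⊥ := by
      intro h
      rw [h, finrank_bot] at hpos
      omega
    obtain ⟨y, hyK, hy0⟩ := Submodule.exists_mem_ne_zero_of_ne_bot hne
    refine ⟨y, hy0, ?_, ?_⟩
    · exact (Submodule.mem_orthogonal K y).mp hyK u
        (Submodule.subset_span (by simp))
    · exact (Submodule.mem_orthogonal K y).mp hyK X
        (Submodule.subset_span (by simp))
  have hLu : ∀ X : V, ⟪X, u⟫ = 0 → L X u = 0 := by
    intro X hXu
    obtain ⟨y, hy0, hyu, hyX⟩ := exists_perp X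
    have h := (hCF X y u y).symm.trans (hRu X y y)
    have hyu' : ⟪y, u⟫ = 0 := (real_inner_comm u y).trans hyu
    rw [hyu', hyX, hXu] at h
    have hyy : (0:ℝ) < ⟪y, y⟫ := by
      rw [real_inner_self_eq_norm_sq]
      have h4 : 0 < ‖y‖ := norm_pos_iff.mpr hy0
      positivity
    have h2 : L X u * ⟪y, y⟫ = 0 := by linarith [h]
    rcases mul_eq_zero.mp h2 with h3 | h3
    · exact h3
    · exact absurd h3 (ne_of_gt hyy)
  set c : ℝ := L u u with hc_def
  have hperp : ∀ X T : V, ⟪X, u⟫ = 0 → L X T = -c * ⟪X, T⟫ := by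
    intro X T hXu
    have h := (hCF X u u T).symm.trans (hRu X u T)
    rw [hu1, hLu X hXu, hXu] at h
    linarith [h]
  have hL : ∀ X T : V, L X T = -c * ⟪X, T⟫ + 2 * c * (⟪X, u⟫ * ⟪T, u⟫) := by
    intro X T
    have hX' : ⟪X - ⟪X, u⟫ • u, u⟫ = 0 := by
      rw [inner_sub_left, real_inner_smul_left, hu1]; ring
    have hT' : ⟪T - ⟪T, u⟫ • u, u⟫ = 0 := by
      rw [inner_sub_left, real_inner_smul_left, hu1]; ring
    have huT : L u T = c * ⟪T, u⟫ := by
      have : L T u = L (T - ⟪T, u⟫ • u) u + ⟪T, u⟫ * L u u := by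
        simp [map_sub, LinearMap.sub_apply, LinearMap.map_smul, LinearMap.smul_apply]
      rw [hLsymm u T, this, hLu _ hT']
      ring
    have hsplit : L X T = L (X - ⟪X, u⟫ • u) T + ⟪X, u⟫ * L u T := by
      simp [map_sub, LinearMap.sub_apply, LinearMap.map_smul, LinearMap.smul_apply]
    rw [hsplit, hperp _ T hX', huT, inner_sub_left, real_inner_smul_left,
      real_inner_comm u T]
    ring
  -- sums over the orthonormal basis
  have hsum1 : ∑ j, ⟪b j, b j⟫ = (n : ℝ) := by
    have h1 : ∀ j, ⟪b j, b j⟫ = 1 := fun j => by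
      rw [real_inner_self_eq_norm_sq, b.orthonormal.1 j]; norm_num
    simp [h1]
  have hsum2 : ∀ x y : V, ∑ j, ⟪x, b j⟫ * ⟪b j, y⟫ = ⟪x, y⟫ :=
    fun x y => b.sum_inner_mul_inner x y
  have hsum3 : ∀ x y : V, ∑ j, ⟪b j, x⟫ * ⟪b j, y⟫ = ⟪x, y⟫ := by
    intro x y
    rw [← hsum2 x y]
    exact Finset.sum_congr rfl fun j _ => by rw [real_inner_comm (b j) x]
  have hRicF : ∀ X Y : V, Ric X Y =
      (2 * (n : ℝ) - 4) * c * (⟪X, u⟫ * ⟪Y, u⟫ - ⟪X, Y⟫) := by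
    intro X Y
    rw [hRic]
    have expand : ∑ j, R X (b j) (b j) Y =
        (2 * c * (⟪X, u⟫ * ⟪Y, u⟫) - 2 * c * ⟪X, Y⟫) * ∑ j, ⟪b j, b j⟫
        + (2 * c) * ∑ j, ⟪X, b j⟫ * ⟪b j, Y⟫
        + (-2 * c * ⟪X, u⟫) * ∑ j, ⟪b j, u⟫ * ⟪b j, Y⟫
        + (2 * c * ⟪X, Y⟫) * ∑ j, ⟪b j, u⟫ * ⟪b j, u⟫
        + (-2 * c * ⟪Y, u⟫) * ∑ j, ⟪X, b j⟫ * ⟪b j, u⟫ := by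
      rw [Finset.mul_sum, Finset.mul_sum, Finset.mul_sum, Finset.mul_sum,
        Finset.mul_sum, ← Finset.sum_add_distrib, ← Finset.sum_add_distrib,
        ← Finset.sum_add_distrib, ← Finset.sum_add_distrib]
      refine Finset.sum_congr rfl fun j _ => ?_
      rw [hCF, hL X Y, hL X (b j), hL (b j) (b j), hL (b j) Y]
      ring
    rw [expand, hsum1, hsum2, hsum2, hsum3, hsum3, hu1, real_inner_comm u Y]
    ring
  have hsform : s = (2 * (n : ℝ) - 4) * c * (1 - (n : ℝ)) := by
    rw [hs]
    have : ∀ j, Ric (b j) (b j) =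
        (2 * (n : ℝ) - 4) * c * (⟪b j, u⟫ * ⟪b j, u⟫ - ⟪b j, b j⟫) :=
      fun j => hRicF (b j) (b j)
    rw [Finset.sum_congr rfl fun j _ => this j]
    rw [← Finset.mul_sum, Finset.sum_sub_distrib, hsum3, hsum1, hu1]
  have hn' : (4 : ℝ) ≤ (n : ℝ) := by exact_mod_cast hn
  have hcle : c ≤ 0 := by
    by_contra hc
    push_neg at hc
    rw [hsform] at hsnn
    have h1 : (0:ℝ) < 2 * (n:ℝ) - 4 := by linarith
    have h2 : (0:ℝ) < (n:ℝ) - 1 := by linarith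
    nlinarith [mul_pos (mul_pos h1 hc) h2]
  intro Y
  rw [hRicF]
  have hCS : ⟪Y, u⟫ * ⟪Y, u⟫ ≤ ⟪Y, Y⟫ * ⟪u, u⟫ :=
    real_inner_mul_inner_self_le Y u
  rw [hu1] at hCS
  nlinarith [mul_nonneg (mul_nonneg (show (0:ℝ) ≤ 2 * (n:ℝ) - 4 by linarith)
    (neg_nonneg.mpr hcle)) (sub_nonneg.mpr hCS)]
end

section
/- Let V be an n-dimensional real inner product space (n ≥ 3), W an inner product space, and α : V × V → W symmetric bilinear with conformally flat Gauss curvature tensor (Schouten tensor L) and one-dimensional nullity Δ = ℝ·X for a unit vector X. Then the curvature tensor R of α restricted to the hyperplane X^⟂ is a constant-curvature tensor of curvature 2h, where h = s/(2(n−1)(n−2)): for all A,B,C,D ∈ X^⟂, R(A,B,C,D) = 2h(⟨A,D⟩⟨B,C⟩ − ⟨A,C⟩⟨B,D⟩). -/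
open scoped RealInnerProductSpace

lemma aux_exists_perp {V : Type*} [NormedAddCommGroup V] [InnerProductSpace ℝ V]
    (n : ℕ) (hn : 3 ≤ n) (b : OrthonormalBasis (Fin n) ℝ V) (X T : V) :
    ∃ z : V, z ≠ 0 ∧ ⟪X, z⟫ = 0 ∧ ⟪T, z⟫ = 0 := by
  have hfd : FiniteDimensional ℝ V := Module.Finite.of_basis b.toBasis
  have hdim : Module.finrank ℝ V = n := by
    rw [Module.finrank_eq_card_basis b.toBasis, Fintype.card_fin]
  have hs1 : ∀ v : V, Module.finrank ℝ (Submodule.span ℝ {v} : Submodule ℝ V) ≤ 1 := by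
    intro v
    rcases eq_or_ne v 0 with rfl | hv
    · rw [Submodule.span_zero_singleton]; simp
    · exact le_of_eq (finrank_span_singleton hv)
  set p : Submodule ℝ V := (Submodule.span ℝ {X}) ⊔ (Submodule.span ℝ {T}) with hpdef
  have hp2 : Module.finrank ℝ p ≤ 2 := by
    have := Submodule.finrank_add_le_finrank_add_finrank (Submodule.span ℝ {X})
      (Submodule.span ℝ {T})
    rw [← hpdef] at this
    have h1 := hs1 X; have h2 := hs1 T
    omega
  have hppos : 0 < Module.finrank ℝ pᗮ := by
    have h3 := Submodule.finrank_add_finrank_orthogonal p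
    omega
  obtain ⟨z, hz, hz0⟩ := Submodule.exists_mem_ne_zero_of_ne_bot (p := pᗮ)
    (by intro hbot; rw [hbot] at hppos; simp at hppos)
  have hz' := (Submodule.mem_orthogonal p z).mp hz
  exact ⟨z, hz0,
    hz' X (Submodule.mem_sup_left (Submodule.mem_span_singleton_self X)),
    hz' T (Submodule.mem_sup_right (Submodule.mem_span_singleton_self T))⟩

theorem stmt_18 {V W : Type*} [NormedAddCommGroup V] [InnerProductSpace ℝ V]
    [NormedAddCommGroup W] [InnerProductSpace ℝ W]
    (n : ℕ) (hn : 3 ≤ n) (b : OrthonormalBasis (Fin n) ℝ V)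
    (α : V →ₗ[ℝ] V →ₗ[ℝ] W) (hαsymm : ∀ x y, α x y = α y x)
    (R : V → V → V → V → ℝ)
    (hR : ∀ X Y Z T, R X Y Z T = ⟪α X T, α Y Z⟫ - ⟪α X Z, α Y T⟫)
    (L : V →ₗ[ℝ] V →ₗ[ℝ] ℝ) (hLsymm : ∀ x y, L x y = L y x)
    (hCF : ∀ X Y Z T : V, R X Y Z T =
      L X T * ⟪Y, Z⟫ - L X Z * ⟪Y, T⟫ + L Y Z * ⟪X, T⟫ - L Y T * ⟪X, Z⟫)
    (Ric : V → V → ℝ)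
    (hRic : ∀ X Y, Ric X Y = ∑ j, R X (b j) (b j) Y)
    (s : ℝ) (hs : s = ∑ j, Ric (b j) (b j))
    (X : V) (hX : ‖X‖ = 1) (hΔ : LinearMap.ker α = Submodule.span ℝ {X})
    (h : ℝ) (hh : h = s / (2 * ((n : ℝ) - 1) * ((n : ℝ) - 2))) :
    ∀ A B C D : V, ⟪X, A⟫ = 0 → ⟪X, B⟫ = 0 → ⟪X, C⟫ = 0 → ⟪X, D⟫ = 0 →
      R A B C D = 2 * h * (⟪A, D⟫ * ⟪B, C⟫ - ⟪A, C⟫ * ⟪B, D⟫) := by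
  -- basic facts
  have hXX : ⟪X, X⟫ = 1 := by
    rw [real_inner_self_eq_norm_sq, hX]; norm_num
  have hαX : α X = 0 := by
    have hmem : X ∈ LinearMap.ker α := by
      rw [hΔ]; exact Submodule.mem_span_singleton_self X
    exact hmem
  -- R with X in first slot vanishes, giving the key identity for L
  have key : ∀ Y Z T : V,
      L X T * ⟪Y, Z⟫ - L X Z * ⟪Y, T⟫ + L Y Z * ⟪X, T⟫ - L Y T * ⟪X, Z⟫ = 0 := by
    intro Y Z T
    have h1 := hCF X Y Z T
    have h2 := hR X Y Z T
    rw [hαX] at h2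
    simp at h2
    rw [h2] at h1
    linarith
  -- L X T = 0 for T ⊥ X
  have hLX0 : ∀ T : V, ⟪X, T⟫ = 0 → L X T = 0 := by
    intro T hT
    obtain ⟨z, hz0, hzX, hzT⟩ := aux_exists_perp n hn b X T
    have hzT' : ⟪z, T⟫ = 0 := by rw [real_inner_comm]; exact hzT
    have hk := key z z T
    rw [hzX, hzT', hT] at hk
    have hzz : ⟪z, z⟫ ≠ 0 := by
      rw [ne_eq, inner_self_eq_zero]; exact hz0
    have : L X T * ⟪z, z⟫ = 0 := by linarith
    exact (mul_eq_zero.mp this).resolve_right hzz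
  set c : ℝ := -(L X X) with hcdef
  -- L on the orthogonal complement of X is c⟨·,·⟩
  have hLperp : ∀ Y Z : V, ⟪X, Y⟫ = 0 → ⟪X, Z⟫ = 0 → L Y Z = c * ⟪Y, Z⟫ := by
    intro Y Z hY hZ
    have hYX : ⟪Y, X⟫ = 0 := by rw [real_inner_comm]; exact hY
    have hk := key Y Z X
    rw [hXX, hYX, hZ] at hk
    simp at hk
    rw [hcdef]; linarith
  -- Parseval-type identity
  have hpar : ∀ Y Z : V, ∑ j, L Y (b j) * ⟪b j, Z⟫ = L Y Z := by
    intro Y Z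
    have hrep : ∑ j, ⟪b j, Z⟫ • b j = Z := b.sum_repr' Z
    calc ∑ j, L Y (b j) * ⟪b j, Z⟫ = ∑ j, L Y (⟪b j, Z⟫ • b j) := by
          refine Finset.sum_congr rfl fun j _ => ?_
          rw [map_smul]; simp [mul_comm]
      _ = L Y (∑ j, ⟪b j, Z⟫ • b j) := by rw [map_sum]
      _ = L Y Z := by rw [hrep]
  have hbb : ∀ j, ⟪b j, b j⟫ = (1 : ℝ) := by
    intro j
    rw [real_inner_self_eq_norm_sq, b.orthonormal.1 j]; norm_num
  set t : ℝ := ∑ j, L (b j) (b j) with htdef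
  -- Ricci in terms of L
  have hRicL : ∀ Y Z : V, Ric Y Z = ((n : ℝ) - 2) * L Y Z + t * ⟪Y, Z⟫ := by
    intro Y Z
    rw [hRic]
    have hterm : ∀ j : Fin n, R Y (b j) (b j) Z =
        L Y Z - L Y (b j) * ⟪b j, Z⟫ + L (b j) (b j) * ⟪Y, Z⟫ - L Z (b j) * ⟪b j, Y⟫ := by
      intro j
      rw [hCF, hbb j, hLsymm (b j) Z, real_inner_comm (b j) Y]
      ring
    rw [Finset.sum_congr rfl fun j _ => hterm j]
    rw [Finset.sum_sub_distrib, Finset.sum_add_distrib, Finset.sum_sub_distrib]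
    rw [hpar Y Z, hpar Z Y, hLsymm Z Y, ← Finset.sum_mul, ← htdef,
      Finset.sum_const, Finset.card_fin, nsmul_eq_mul]
    push_cast
    ring
  -- s = 2(n-1) t
  have hst : s = 2 * ((n : ℝ) - 1) * t := by
    rw [hs, Finset.sum_congr rfl fun j _ => hRicL (b j) (b j)]
    simp only [hbb, mul_one]
    rw [Finset.sum_add_distrib, ← Finset.mul_sum, ← htdef,
      Finset.sum_const, Finset.card_fin, nsmul_eq_mul]
    push_cast
    ring
  -- t = (n-2) c
  have htc : t = ((n : ℝ) - 2) * c := by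
    have hterm : ∀ j : Fin n, L (b j) (b j) = c - 2 * c * (⟪X, b j⟫ * ⟪b j, X⟫) := by
      intro j
      set r : ℝ := ⟪X, b j⟫ with hrdef
      have hP : ⟪X, b j - r • X⟫ = 0 := by
        rw [inner_sub_right, real_inner_smul_right, hXX]
        simp [hrdef]
      have hsplit : b j = (b j - r • X) + r • X := by abel
      have hLP : L (b j - r • X) (b j - r • X) = c * ⟪b j - r • X, b j - r • X⟫ :=
        hLperp _ _ hP hP
      have hbjX : ⟪b j, X⟫ = r := by rw [real_inner_comm]
      have hnorm : ⟪b j - r • X, b j - r • X⟫ = 1 - r * r := by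
        rw [inner_sub_sub_self]
        rw [real_inner_smul_right, real_inner_smul_left, real_inner_smul_left,
          real_inner_smul_right, hXX, hbb j, hbjX]
        ring
      have hLXbj : L X (b j - r • X) = 0 := hLX0 _ hP
      have e1 : L (b j) (b j) =
          L (b j - r • X) (b j - r • X) + r * L X (b j - r • X)
          + r * L (b j - r • X) X + r * r * L X X := by
        conv_lhs => rw [hsplit]
        simp only [map_add, map_smul, LinearMap.add_apply, LinearMap.smul_apply,
          smul_eq_mul]
        ring
      rw [e1, hLP, hnorm, hLXbj, hLsymm (b j - r • X) X, hLXbj]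
      have hLXXc : L X X = -c := by rw [hcdef]; ring
      rw [hLXXc, hbjX]
      ring
    rw [htdef, Finset.sum_congr rfl fun j _ => hterm j]
    rw [Finset.sum_sub_distrib, Finset.sum_const, Finset.card_fin, ← Finset.mul_sum]
    rw [b.sum_inner_mul_inner X X, hXX]
    push_cast
    ring
  -- h = c
  have hn1 : ((n : ℝ) - 1) ≠ 0 := by
    have : (3 : ℝ) ≤ (n : ℝ) := by exact_mod_cast hn
    linarith
  have hn2 : ((n : ℝ) - 2) ≠ 0 := by
    have : (3 : ℝ) ≤ (n : ℝ) := by exact_mod_cast hn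
    linarith
  have hhc : h = c := by
    rw [hh, hst, htc]
    field_simp
  -- conclude
  intro A B C D hA hB hC hD
  rw [hCF, hLperp A D hA hD, hLperp A C hA hC, hLperp B C hB hC, hLperp B D hB hD, hhc]
  ring
end

section
/- Let V be an n-dimensional real inner product space (n ≥ 3) and R an algebraic curvature tensor of the conformally flat form with Schouten tensor L. If R has a nonzero vector X with R(X,Y,Z,T) = 0 for all Y,Z,T (curvature nullity) and the scalar curvature of R is zero, then L = 0 and hence R = 0. -/
open scoped RealInnerProductSpace

theorem aux_orth {V : Type*} [NormedAddCommGroup V] [InnerProductSpace ℝ V]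
    [FiniteDimensional ℝ V] (hn : 3 ≤ Module.finrank ℝ V) (x y : V) :
    ∃ w : V, w ≠ 0 ∧ ⟪x, w⟫ = 0 ∧ ⟪y, w⟫ = 0 := by
  classical
  set K := Submodule.span ℝ (↑({x, y} : Finset V) : Set V) with hKdef
  have hK : Module.finrank ℝ K ≤ 2 := by
    refine (finrank_span_finset_le_card _).trans ?_
    exact (Finset.card_insert_le _ _).trans (by simp)
  have hpos : 0 < Module.finrank ℝ Kᗮ := by
    have h := Submodule.finrank_add_finrank_orthogonal K
    omega
  have : Nontrivial Kᗮ := Module.finrank_pos_iff.mp hpos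
  obtain ⟨w, hw0⟩ := exists_ne (0 : Kᗮ)
  refine ⟨(w : V), by simpa using hw0, ?_, ?_⟩
  · exact w.2 x (Submodule.subset_span (by simp))
  · exact w.2 y (Submodule.subset_span (by simp))

theorem stmt_19 {V : Type*} [NormedAddCommGroup V] [InnerProductSpace ℝ V]
    (n : ℕ) (hn : 3 ≤ n) (b : OrthonormalBasis (Fin n) ℝ V)
    (L : V →ₗ[ℝ] V →ₗ[ℝ] ℝ) (hLsymm : ∀ x y, L x y = L y x)
    (R : V → V → V → V → ℝ)
    (hR : ∀ A B C D, R A B C D =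
      L A D * ⟪B, C⟫ - L A C * ⟪B, D⟫ + L B C * ⟪A, D⟫ - L B D * ⟪A, C⟫)
    (X : V) (hX : X ≠ 0) (hnull : ∀ Y Z T : V, R X Y Z T = 0)
    (s : ℝ) (hs : s = ∑ i, ∑ j, R (b i) (b j) (b j) (b i)) (hs0 : s = 0) :
    (∀ Y Z : V, L Y Z = 0) ∧ (∀ A B C D : V, R A B C D = 0) := by
  have hfd : FiniteDimensional ℝ V := b.toBasis.finiteDimensional_of_finite
  have hrank : Module.finrank ℝ V = n := by
    rw [Module.finrank_eq_card_basis b.toBasis, Fintype.card_fin]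
  have hx2ne : ⟪X, X⟫ ≠ 0 := inner_self_ne_zero.mpr hX
  have hx2pos : 0 < ⟪X, X⟫ :=
    real_inner_self_nonneg.lt_of_ne (Ne.symm hx2ne)
  -- nullity identity
  have hN : ∀ Y Z T : V,
      L X T * ⟪Y, Z⟫ - L X Z * ⟪Y, T⟫ + L Y Z * ⟪X, T⟫ - L Y T * ⟪X, Z⟫ = 0 := by
    intro Y Z T
    have h := hnull Y Z T
    rw [hR] at h
    exact h
  -- get Z ⟂ X and W ⟂ X, Z
  obtain ⟨Z, hZ0, hXZ, -⟩ := aux_orth (by omega) X X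
  obtain ⟨W, hW0, hXW, hZW⟩ := aux_orth (by omega) X Z
  have hWZ : ⟪W, Z⟫ = 0 := by rw [real_inner_comm]; exact hZW
  have hZZ0 : ⟪Z, Z⟫ ≠ 0 := inner_self_ne_zero.mpr hZ0
  have hWW0 : ⟪W, W⟫ ≠ 0 := inner_self_ne_zero.mpr hW0
  -- L X Z = 0
  have hLXZ : L X Z = 0 := by
    have h := hN W W Z
    have key : L X Z * ⟪W, W⟫ = 0 := by
      linear_combination h + (L X W) * hWZ - (L W W) * hXZ + (L W Z) * hXW
    exact (mul_eq_zero.mp key).resolve_right hWW0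
  -- L Z Z * ⟪X,X⟫ = - L X X * ⟪Z,Z⟫
  have hLZZ : L Z Z * ⟪X, X⟫ = -(L X X * ⟪Z, Z⟫) := by
    have h := hN Z Z X
    have hZX : ⟪Z, X⟫ = 0 := by rw [real_inner_comm]; exact hXZ
    linear_combination h + (L X Z) * hZX + (L Z X) * hXZ
  -- key: L X T * ⟪X,X⟫ = L X X * ⟪X, T⟫
  have hf : ∀ T : V, L X T * ⟪X, X⟫ = L X X * ⟪X, T⟫ := by
    intro T
    have h := hN Z Z T
    have key : (L X T * ⟪X, X⟫ - L X X * ⟪X, T⟫) * ⟪Z, Z⟫ = 0 := by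
      linear_combination ⟪X, X⟫ * h - ⟪X, T⟫ * hLZZ
        + (⟪Z, T⟫ * ⟪X, X⟫) * hLXZ + (L Z T * ⟪X, X⟫) * hXZ
    have := (mul_eq_zero.mp key).resolve_right hZZ0
    linarith
  -- full expression for L
  have hL : ∀ Y Z' : V, L Y Z' * ⟪X, X⟫ * ⟪X, X⟫
      = L X X * (2 * ⟪X, Y⟫ * ⟪X, Z'⟫ - ⟪Y, Z'⟫ * ⟪X, X⟫) := by
    intro Y Z'
    linear_combination ⟪X, X⟫ * (hN Y Z' X) + (-(⟪X, X⟫ * L X Z')) * (real_inner_comm Y X)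
      + ⟪X, Y⟫ * (hf Z') + (⟪X, X⟫ * ⟪X, Z'⟫) * (hLsymm Y X) + ⟪X, Z'⟫ * (hf Y)
  -- orthonormality
  have hbij : ∀ i j : Fin n, ⟪b i, b j⟫ = if i = j then 1 else 0 := fun i j =>
    orthonormal_iff_ite.mp b.orthonormal i j
  -- scalar curvature computation
  set T : ℝ := ∑ i, L (b i) (b i) with hTdef
  have hsT : s = (2 * (n : ℝ) - 2) * T := by
    rw [hs]
    have hterm : ∀ i j : Fin n, R (b i) (b j) (b j) (b i)
        = L (b i) (b i) + L (b j) (b j)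
          - (if i = j then L (b i) (b j) + L (b j) (b i) else 0) := by
      intro i j
      rw [hR, hbij i i, hbij j j, hbij i j, hbij j i]
      by_cases h : i = j
      · subst h; simp
      · simp [h, Ne.symm h]
    simp_rw [hterm]
    have e1 : ∀ i : Fin n, ∑ j, (L (b i) (b i) + L (b j) (b j)
        - (if i = j then L (b i) (b j) + L (b j) (b i) else 0))
        = (n : ℝ) * L (b i) (b i) + T - 2 * L (b i) (b i) := by
      intro i
      rw [Finset.sum_sub_distrib, Finset.sum_add_distrib, Finset.sum_const,
        Finset.card_univ, Fintype.card_fin, Finset.sum_ite_eq]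
      simp [hTdef, nsmul_eq_mul]
      ring
    simp_rw [e1]
    have e2 : ∑ i : Fin n, ((n : ℝ) * L (b i) (b i) + T - 2 * L (b i) (b i))
        = (n : ℝ) * T + (n : ℝ) * T - 2 * T := by
      rw [Finset.sum_sub_distrib, Finset.sum_add_distrib, ← Finset.mul_sum,
        ← Finset.mul_sum, Finset.sum_const, Finset.card_univ, Fintype.card_fin,
        ← hTdef, nsmul_eq_mul]
    rw [e2]
    ring
  -- sum of diagonal via hL and Parseval
  have hPar : ∑ i, ⟪X, b i⟫ * ⟪X, b i⟫ = ⟪X, X⟫ := by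
    have h := b.sum_inner_mul_inner X X
    calc ∑ i, ⟪X, b i⟫ * ⟪X, b i⟫ = ∑ i, ⟪X, b i⟫ * ⟪b i, X⟫ :=
          Finset.sum_congr rfl fun i _ => by rw [real_inner_comm X (b i)]
      _ = ⟪X, X⟫ := h
  have hT : T * (⟪X, X⟫ * ⟪X, X⟫) = L X X * (2 - (n : ℝ)) * ⟪X, X⟫ := by
    have h1 : ∑ i, L (b i) (b i) * ⟪X, X⟫ * ⟪X, X⟫
        = ∑ i, L X X * (2 * (⟪X, b i⟫ * ⟪X, b i⟫) - 1 * ⟪X, X⟫) := by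
      refine Finset.sum_congr rfl fun i _ => ?_
      have h := hL (b i) (b i)
      rw [hbij i i] at h
      norm_num at h
      rw [real_inner_self_eq_norm_sq]
      linear_combination h
    have h2 : ∑ i, L X X * (2 * (⟪X, b i⟫ * ⟪X, b i⟫) - 1 * ⟪X, X⟫)
        = L X X * (2 * ⟪X, X⟫ - (n : ℝ) * ⟪X, X⟫) := by
      rw [← Finset.mul_sum, Finset.sum_sub_distrib, ← Finset.mul_sum, hPar]
      simp [Finset.card_univ]
    calc T * (⟪X, X⟫ * ⟪X, X⟫) = ∑ i, L (b i) (b i) * ⟪X, X⟫ * ⟪X, X⟫ := by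
          rw [hTdef, Finset.sum_mul]
          exact Finset.sum_congr rfl fun i _ => by ring
      _ = L X X * (2 - (n : ℝ)) * ⟪X, X⟫ := by rw [h1, h2]; ring
  -- conclude L X X = 0
  have hT0 : T = 0 := by
    have h := hsT
    rw [hs0] at h
    have hn' : (3 : ℝ) ≤ (n : ℝ) := by exact_mod_cast hn
    have : (2 * (n : ℝ) - 2) ≠ 0 := by nlinarith
    rcases mul_eq_zero.mp h.symm with h' | h'
    · exact absurd h' this
    · exact h'
  have hLXX : L X X = 0 := by
    have h := hT
    rw [hT0] at h
    have hn' : (3 : ℝ) ≤ (n : ℝ) := by exact_mod_cast hn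
    have h2 : L X X * ((2 - (n : ℝ)) * ⟪X, X⟫) = 0 := by linarith [h]
    have hne : (2 - (n : ℝ)) * ⟪X, X⟫ ≠ 0 :=
      mul_ne_zero (by nlinarith) hx2ne
    exact (mul_eq_zero.mp h2).resolve_right hne
  -- conclude L = 0 and R = 0
  have hL0 : ∀ Y Z' : V, L Y Z' = 0 := by
    intro Y Z'
    have h := hL Y Z'
    rw [hLXX] at h
    have h2 : L Y Z' * (⟪X, X⟫ * ⟪X, X⟫) = 0 := by linarith [h]
    exact (mul_eq_zero.mp h2).resolve_right (mul_ne_zero hx2ne hx2ne)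
  exact ⟨hL0, fun A B C D => by rw [hR, hL0, hL0, hL0, hL0]; ring⟩
end
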